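/- arXiv:2111.14581 — 2 statements merged into one kernel-verified Lean document; each statement's English description precedes it below -/
import Mathlib

section
/- Let 0 < q < 1, P > 0, and p a real with 1/2 ≤ p < (q+1)/2. Define Δ = (p/q - (1-p)/(1-q))·P, Δ̄ = P/q (vanilla pseudo-labeling), and Δ̂ = 0 (random-label assignment). Then |Δ - Δ̄| > |Δ - Δ̂|. -/
/-!
Both errors share the positive factor `P / (q (1 - q))`: the true influence is
`Δ = (p - q) · P / (q (1 - q))` and `Δ - Δ̄ = (p - 1) · P / (q (1 - q))`. The claim therefore reduces
to `|p - q| < 1 - p`, i.e. to `q < 1` and `2p < q + 1`.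
-/

lemma abs_sub_lt_abs_sub_one {p q : ℝ} (hq : q < 1) (hp : p < (q + 1) / 2) :
    |p - q| < |p - 1| := by
  rw [abs_sub_comm p 1, abs_of_pos (a := 1 - p) (by linarith), abs_lt]
  constructor <;> linarith

section Influence

variable {p q : ℝ} (P : ℝ)

lemma influence_eq (hq0 : q ≠ 0) (hq1 : 1 - q ≠ 0) :
    (p / q - (1 - p) / (1 - q)) * P = (p - q) * (P / (q * (1 - q))) := by
  field_simp
  ring

lemma influence_sub_pseudo_eq (hq0 : q ≠ 0) (hq1 : 1 - q ≠ 0) :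
    (p / q - (1 - p) / (1 - q)) * P - P / q = (p - 1) * (P / (q * (1 - q))) := by
  field_simp
  ring

end Influence

theorem stmt4_general (p q P : ℝ) (hq0 : 0 < q) (hq1 : q < 1) (hP : 0 < P)
    (hp2 : p < (q + 1)/2)
    (Δ Δbar Δhat : ℝ) (hΔ : Δ = (p/q - (1 - p)/(1 - q)) * P)
    (hΔbar : Δbar = P/q) (hΔhat : Δhat = 0) :
    |Δ - Δbar| > |Δ - Δhat| := by
  subst hΔ hΔbar hΔhat
  have hq0' : q ≠ 0 := hq0.ne'
  have hq1' : 1 - q ≠ 0 := (sub_pos.mpr hq1).ne'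
  have hscale : 0 < P / (q * (1 - q)) := div_pos hP (mul_pos hq0 (sub_pos.mpr hq1))
  rw [sub_zero, influence_sub_pseudo_eq P hq0' hq1', influence_eq P hq0' hq1', abs_mul, abs_mul,
    abs_of_pos hscale]
  exact mul_lt_mul_of_pos_right (abs_sub_lt_abs_sub_one hq1 hp2) hscale

theorem stmt4 (p q P : ℝ) (hq0 : 0 < q) (hq1 : q < 1) (hP : 0 < P)
    (hp1 : 1/2 ≤ p) (hp2 : p < (q + 1)/2)
    (Δ Δbar Δhat : ℝ) (hΔ : Δ = (p/q - (1 - p)/(1 - q)) * P)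
    (hΔbar : Δbar = P/q) (hΔhat : Δhat = 0) :
    |Δ - Δbar| > |Δ - Δhat| :=
  stmt4_general p q P hq0 hq1 hP hp2 Δ Δbar Δhat hΔ hΔbar hΔhat
end

section
/- Let X be a finite type, with disjoint subsets X_L and X_U covering X, let μ be a probability mass function on X, and g, h : X → [0,1] functions agreeing on X_L with Σ_x g(x)μ(x) = Σ_x h(x)μ(x) = q ∈ (0,1). Then for any S ⊆ X, the difference between the disparities Σ_{x∈S}(g(x)μ(x)/q - (1-g(x))μ(x)/(1-q)) and Σ_{x∈S}(h(x)μ(x)/q - (1-h(x))μ(x)/(1-q)) equals (1/q + 1/(1-q))·Σ_{x∈S∩X_U}(g(x) - h(x))μ(x); in particular, if Σ_{x∈S∩X_U}(g(x)-h(x))μ(x) = 0 the two disparities are equal. -/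
theorem stmt19 {X : Type*} [Fintype X] [DecidableEq X]
    (XL XU : Finset X) (hdisj : Disjoint XL XU) (hcover : XL ∪ XU = Finset.univ)
    (μ g h : X → ℝ) (hμ0 : ∀ x, 0 ≤ μ x) (hμ1 : ∑ x, μ x = 1)
    (hg : ∀ x, g x ∈ Set.Icc (0:ℝ) 1) (hh : ∀ x, h x ∈ Set.Icc (0:ℝ) 1)
    (hagree : ∀ x ∈ XL, g x = h x)
    (q : ℝ) (hq0 : 0 < q) (hq1 : q < 1)
    (hqg : ∑ x, g x * μ x = q) (hqh : ∑ x, h x * μ x = q)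
    (S : Finset X) :
    (∑ x ∈ S, (g x * μ x / q - (1 - g x) * μ x / (1 - q))) -
      (∑ x ∈ S, (h x * μ x / q - (1 - h x) * μ x / (1 - q))) =
      (1/q + 1/(1 - q)) * ∑ x ∈ S ∩ XU, (g x - h x) * μ x ∧
    ((∑ x ∈ S ∩ XU, (g x - h x) * μ x) = 0 →
      ∑ x ∈ S, (g x * μ x / q - (1 - g x) * μ x / (1 - q)) =
        ∑ x ∈ S, (h x * μ x / q - (1 - h x) * μ x / (1 - q))) := by
  have hkey : ∑ x ∈ S ∩ XU, (g x - h x) * μ x = ∑ x ∈ S, (g x - h x) * μ x := by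
    refine Finset.sum_subset (Finset.inter_subset_left) ?_
    intro x hx hnx
    have hxL : x ∈ XL := by
      by_contra hL
      have : x ∈ XL ∪ XU := hcover ▸ Finset.mem_univ x
      rcases Finset.mem_union.mp this with h1 | h2
      · exact hL h1
      · exact hnx (Finset.mem_inter.mpr ⟨hx, h2⟩)
    rw [hagree x hxL]; ring
  have hmain :
      (∑ x ∈ S, (g x * μ x / q - (1 - g x) * μ x / (1 - q))) -
      (∑ x ∈ S, (h x * μ x / q - (1 - h x) * μ x / (1 - q))) =
      (1/q + 1/(1 - q)) * ∑ x ∈ S ∩ XU, (g x - h x) * μ x := by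
    rw [hkey, Finset.mul_sum, ← Finset.sum_sub_distrib]
    refine Finset.sum_congr rfl fun x _ => ?_
    field_simp
    ring
  exact ⟨hmain, fun h0 => by linarith [hmain, h0 ▸ hmain]⟩
end
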